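/- arXiv:math/0406203 — 4 statements merged into one kernel-verified Lean document; each statement's English description precedes it below -/
import Mathlib

section
/- A polynomial law φ between K-modules A and B that is homogeneous of degree 1 is linear: each φ_L is an L-module homomorphism, and φ is determined by the K-linear map φ_K : A → B. -/
open TensorProduct MvPolynomial
open TensorProduct MvPolynomial

noncomputable section
variable {L : Type} [CommRing L]

/-- The substitution `X i ↦ X i * T` as an `L`-algebra hom into `Polynomial (MvPolynomial (Fin 2) L)`. -/
def theta (L : Type) [CommRing L] :
    MvPolynomial (Fin 2) L →ₐ[L] Polynomial (MvPolynomial (Fin 2) L) :=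
  MvPolynomial.aeval (fun i : Fin 2 => Polynomial.C (MvPolynomial.X i) * Polynomial.X)

def kap1 (L : Type) [CommRing L] :
    Polynomial (MvPolynomial (Fin 2) L) →ₗ[L] MvPolynomial (Fin 2) L :=
  (Polynomial.lcoeff (MvPolynomial (Fin 2) L) 1).restrictScalars L

def emm (L : Type) [CommRing L] (i : Fin 2) :
    MvPolynomial (Fin 2) L →ₗ[L] MvPolynomial (Fin 2) L :=
  LinearMap.smulRight (MvPolynomial.lcoeff (σ := Fin 2) (R := L) (Finsupp.single i 1)) (MvPolynomial.X i)

theorem kap1_theta (L : Type) [CommRing L] :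
    LinearMap.comp (kap1 L) (theta L).toLinearMap = emm L 0 + emm L 1 := by
  apply LinearMap.ext
  intro p
  have main : ∀ p : MvPolynomial (Fin 2) L,
      Polynomial.coeff (theta L p) 0 = MvPolynomial.C (MvPolynomial.coeff 0 p) ∧
      Polynomial.coeff (theta L p) 1
        = MvPolynomial.X 0 * MvPolynomial.C (MvPolynomial.coeff (Finsupp.single 0 1) p)
          + MvPolynomial.X 1 * MvPolynomial.C (MvPolynomial.coeff (Finsupp.single 1 1) p) := by
    intro p
    induction p using MvPolynomial.induction_on with
    | C a =>
        constructor
        · simp [theta, MvPolynomial.aeval_C, Polynomial.coeff_C]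
        · simp [theta, MvPolynomial.aeval_C, Polynomial.coeff_C, MvPolynomial.coeff_C,
            Finsupp.single_eq_zero, eq_comm]
    | add p q hp hq =>
        constructor
        · simp [map_add, hp.1, hq.1]
        · simp only [map_add, Polynomial.coeff_add, hp.2, hq.2, MvPolynomial.coeff_add, map_add]
          ring
    | mul_X p i hp =>
        have expand : theta L (p * MvPolynomial.X i)
            = ((theta L) p * Polynomial.C (MvPolynomial.X i)) * Polynomial.X := by
          rw [map_mul]
          show _ * (MvPolynomial.aeval _) (MvPolynomial.X i) = _
          rw [MvPolynomial.aeval_X]; ring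
        constructor
        · rw [expand]
          simp [MvPolynomial.coeff_mul_X' 0 i p]
        · rw [expand, Polynomial.coeff_mul_X, Polynomial.coeff_mul_C, hp.1]
          have hi : i = 0 ∨ i = 1 := by omega
          rcases hi with rfl | rfl
          · rw [MvPolynomial.coeff_mul_X' (Finsupp.single 0 1) 0 p,
              MvPolynomial.coeff_mul_X' (Finsupp.single 1 1) 0 p]
            simp [mul_comm]
          · rw [MvPolynomial.coeff_mul_X' (Finsupp.single 0 1) 1 p,
              MvPolynomial.coeff_mul_X' (Finsupp.single 1 1) 1 p]
            simp [mul_comm]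
  have h2 := (main p).2
  simp only [LinearMap.comp_apply, LinearMap.add_apply, kap1, emm,
    LinearMap.restrictScalars_apply, Polynomial.lcoeff_apply, AlgHom.toLinearMap_apply,
    LinearMap.smulRight_apply, MvPolynomial.lcoeff_apply]
  rw [h2]
  rw [MvPolynomial.smul_eq_C_mul, MvPolynomial.smul_eq_C_mul]
  ring

section Aux

variable {K : Type} [CommRing K] {M : Type} [AddCommGroup M] [Module K M]

lemma rTensor_algHom_smul {L L' : Type} [CommRing L] [Algebra K L] [CommRing L']
    [Algebra K L'] (f : L →ₐ[K] L') (a : L) (x : L ⊗[K] M) :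
    LinearMap.rTensor M f.toLinearMap (a • x) = f a • LinearMap.rTensor M f.toLinearMap x := by
  induction x using TensorProduct.induction_on with
  | zero => simp
  | tmul l m =>
      simp only [smul_tmul', LinearMap.rTensor_tmul, AlgHom.toLinearMap_apply, smul_eq_mul,
        map_mul]
  | add x y hx hy => simp [smul_add, hx, hy]

lemma rTensor_smul_linearMap {L L' : Type} [CommRing L] [Algebra K L] [CommRing L']
    [Algebra K L'] (c : L') (f : L →ₗ[K] L') (x : L ⊗[K] M) :
    LinearMap.rTensor M (c • f) x = c • LinearMap.rTensor M f x := by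
  induction x using TensorProduct.induction_on with
  | zero => simp
  | tmul l m => simp [smul_tmul']
  | add x y hx hy => simp [smul_add, hx, hy]

-- extraction of the T-coefficient of degree 1
lemma kap1_X_smul {L : Type} [CommRing L] [Algebra K L]
    (y : (MvPolynomial (Fin 2) L) ⊗[K] M) :
    LinearMap.rTensor M ((kap1 L).restrictScalars K)
      ((Polynomial.X : Polynomial (MvPolynomial (Fin 2) L)) •
        LinearMap.rTensor M (IsScalarTower.toAlgHom K (MvPolynomial (Fin 2) L)
          (Polynomial (MvPolynomial (Fin 2) L))).toLinearMap y) = y := by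
  induction y using TensorProduct.induction_on with
  | zero => simp
  | tmul r m =>
      simp only [LinearMap.rTensor_tmul, AlgHom.toLinearMap_apply,
        IsScalarTower.toAlgHom_apply, smul_tmul', smul_eq_mul,
        LinearMap.restrictScalars_apply]
      congr 1
      show kap1 L (Polynomial.X * algebraMap _ _ r) = r
      have : (algebraMap (MvPolynomial (Fin 2) L) (Polynomial (MvPolynomial (Fin 2) L))) r
          = Polynomial.C r := rfl
      rw [this, mul_comm]
      show Polynomial.coeff (Polynomial.C r * Polynomial.X) 1 = r
      rw [Polynomial.coeff_C_mul, Polynomial.coeff_X_one, mul_one]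
  | add x y hx hy => simp only [map_add, smul_add, hx, hy]

end Aux


/-- A polynomial law between `K`-modules `A` and `B`: a family of maps
`L ⊗[K] A → L ⊗[K] B`, natural in the commutative `K`-algebra `L`. -/
structure PolynomialLaw' (K : Type) [CommRing K] (A B : Type)
    [AddCommGroup A] [Module K A] [AddCommGroup B] [Module K B] where
  toFun : (L : Type) → [CommRing L] → [Algebra K L] → L ⊗[K] A → L ⊗[K] B
  isCompat : ∀ (L : Type) [CommRing L] [Algebra K L]
      (L' : Type) [CommRing L'] [Algebra K L'] (f : L →ₐ[K] L') (x : L ⊗[K] A),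
    (LinearMap.rTensor B f.toLinearMap) (toFun L x) =
      toFun L' ((LinearMap.rTensor A f.toLinearMap) x)

/-- A polynomial law is homogeneous of degree `n` if `φ_L (a • u) = a ^ n • φ_L u`. -/
def PolynomialLaw'.IsHomogeneous {K : Type} [CommRing K] {A B : Type}
    [AddCommGroup A] [Module K A] [AddCommGroup B] [Module K B]
    (φ : PolynomialLaw' K A B) (n : ℕ) : Prop :=
  ∀ (L : Type) [CommRing L] [Algebra K L] (a : L) (u : L ⊗[K] A),
    φ.toFun L (a • u) = a ^ n • φ.toFun L u



theorem PolynomialLaw'.one_aux {K : Type} [CommRing K] {A B : Type}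
    [AddCommGroup A] [Module K A] [AddCommGroup B] [Module K B]
    (φ : PolynomialLaw' K A B) (hφ : φ.IsHomogeneous 1)
    (L : Type) [CommRing L] [Algebra K L] (u v : L ⊗[K] A) :
    ∃ q₀ q₁ : L ⊗[K] B, ∀ s t : L, φ.toFun L (s • u + t • v) = s • q₀ + t • q₁ := by
  classical
  let j : L →ₐ[K] MvPolynomial (Fin 2) L := IsScalarTower.toAlgHom K L (MvPolynomial (Fin 2) L)
  let ju : MvPolynomial (Fin 2) L ⊗[K] A := LinearMap.rTensor A j.toLinearMap u
  let jv : MvPolynomial (Fin 2) L ⊗[K] A := LinearMap.rTensor A j.toLinearMap v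
  let w : MvPolynomial (Fin 2) L ⊗[K] A := (X 0 : MvPolynomial (Fin 2) L) • ju + (X 1 : MvPolynomial (Fin 2) L) • jv
  let P : MvPolynomial (Fin 2) L ⊗[K] B := φ.toFun (MvPolynomial (Fin 2) L) w
  let ev : L → L → (MvPolynomial (Fin 2) L →ₐ[K] L) := fun s t =>
    (MvPolynomial.aeval (R := L) ![s, t]).restrictScalars K
  have hevj : ∀ s t : L, (ev s t).toLinearMap ∘ₗ j.toLinearMap = LinearMap.id := by
    intro s t
    apply LinearMap.ext
    intro l
    show (ev s t) (algebraMap L (MvPolynomial (Fin 2) L) l) = l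
    rw [MvPolynomial.algebraMap_eq]
    show (MvPolynomial.aeval (R := L) ![s, t]) (C l) = l
    rw [MvPolynomial.aeval_C]
    rfl
  have hev : ∀ (s t : L) (x : L ⊗[K] A) (i : Fin 2),
      LinearMap.rTensor A (ev s t).toLinearMap
        ((X i : MvPolynomial (Fin 2) L) • LinearMap.rTensor A j.toLinearMap x)
        = (![s, t] i) • x := by
    intro s t x i
    rw [rTensor_algHom_smul (K := K) (ev s t), ← LinearMap.comp_apply,
      ← LinearMap.rTensor_comp, hevj, LinearMap.rTensor_id]
    show (ev s t) (X i) • x = _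
    congr 1
    show (MvPolynomial.aeval (R := L) ![s, t]) (X i) = _
    rw [MvPolynomial.aeval_X]
  have hA : ∀ s t : L, φ.toFun L (s • u + t • v)
      = LinearMap.rTensor B (ev s t).toLinearMap P := by
    intro s t
    rw [φ.isCompat (MvPolynomial (Fin 2) L) L (ev s t) w]
    congr 1
    symm
    show LinearMap.rTensor A (ev s t).toLinearMap ((X 0 : MvPolynomial (Fin 2) L) • ju + (X 1 : MvPolynomial (Fin 2) L) • jv) = _
    rw [map_add, hev s t u 0, hev s t v 1]
    rfl
  -- the scaling substitution
  let ι : MvPolynomial (Fin 2) L →ₐ[K] Polynomial (MvPolynomial (Fin 2) L) :=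
    IsScalarTower.toAlgHom K (MvPolynomial (Fin 2) L) (Polynomial (MvPolynomial (Fin 2) L))
  let θ : MvPolynomial (Fin 2) L →ₐ[K] Polynomial (MvPolynomial (Fin 2) L) :=
    (theta L).restrictScalars K
  have hθj : θ.toLinearMap ∘ₗ j.toLinearMap = ι.toLinearMap ∘ₗ j.toLinearMap := by
    apply LinearMap.ext
    intro l
    show (theta L) (algebraMap L (MvPolynomial (Fin 2) L) l)
      = algebraMap (MvPolynomial (Fin 2) L) _ (algebraMap L (MvPolynomial (Fin 2) L) l)
    rw [AlgHom.commutes]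
    rw [← IsScalarTower.algebraMap_apply]
  have hθw : LinearMap.rTensor A θ.toLinearMap w
      = (Polynomial.X : Polynomial (MvPolynomial (Fin 2) L)) •
          LinearMap.rTensor A ι.toLinearMap w := by
    show LinearMap.rTensor A θ.toLinearMap ((X 0 : MvPolynomial (Fin 2) L) • ju + (X 1 : MvPolynomial (Fin 2) L) • jv) = _
    rw [map_add, map_add, smul_add]
    congr 1
    · rw [rTensor_algHom_smul (K := K) θ, rTensor_algHom_smul (K := K) ι,
        ← LinearMap.comp_apply, ← LinearMap.comp_apply, ← LinearMap.rTensor_comp,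
        ← LinearMap.rTensor_comp, hθj, smul_smul]
      congr 1
      show (theta L) (X 0) = Polynomial.X * (algebraMap (MvPolynomial (Fin 2) L) _ (X 0))
      have : (algebraMap (MvPolynomial (Fin 2) L) (Polynomial (MvPolynomial (Fin 2) L))) (X 0)
          = Polynomial.C (X 0) := rfl
      rw [this, mul_comm]
      exact MvPolynomial.aeval_X _ 0
    · rw [rTensor_algHom_smul (K := K) θ, rTensor_algHom_smul (K := K) ι,
        ← LinearMap.comp_apply, ← LinearMap.comp_apply, ← LinearMap.rTensor_comp,
        ← LinearMap.rTensor_comp, hθj, smul_smul]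
      congr 1
      show (theta L) (X 1) = Polynomial.X * (algebraMap (MvPolynomial (Fin 2) L) _ (X 1))
      have : (algebraMap (MvPolynomial (Fin 2) L) (Polynomial (MvPolynomial (Fin 2) L))) (X 1)
          = Polynomial.C (X 1) := rfl
      rw [this, mul_comm]
      exact MvPolynomial.aeval_X _ 1
  have hP : LinearMap.rTensor B θ.toLinearMap P
      = (Polynomial.X : Polynomial (MvPolynomial (Fin 2) L)) •
          LinearMap.rTensor B ι.toLinearMap P := by
    rw [φ.isCompat _ _ θ w, hθw, hφ _ _ _, pow_one, φ.isCompat _ _ ι w]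
  -- extract the degree-one coefficient
  have hPP : P = (X 0 : MvPolynomial (Fin 2) L) • LinearMap.rTensor B j.toLinearMap
        (LinearMap.rTensor B ((MvPolynomial.lcoeff (σ := Fin 2) (R := L)
          (Finsupp.single 0 1)).restrictScalars K) P)
      + (X 1 : MvPolynomial (Fin 2) L) • LinearMap.rTensor B j.toLinearMap
        (LinearMap.rTensor B ((MvPolynomial.lcoeff (σ := Fin 2) (R := L)
          (Finsupp.single 1 1)).restrictScalars K) P) := by
    have h1 := congrArg (LinearMap.rTensor B ((kap1 L).restrictScalars K)) hP
    rw [kap1_X_smul (K := K)] at h1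
    rw [← LinearMap.comp_apply, ← LinearMap.rTensor_comp] at h1
    have h2 : ((kap1 L).restrictScalars K) ∘ₗ θ.toLinearMap
        = LinearMap.restrictScalars K ((kap1 L) ∘ₗ (theta L).toLinearMap) :=
      LinearMap.ext fun p => rfl
    rw [h2, kap1_theta] at h1
    have h3 : LinearMap.restrictScalars K (emm L 0 + emm L 1)
        = ((X 0 : MvPolynomial (Fin 2) L) • (j.toLinearMap ∘ₗ
            ((MvPolynomial.lcoeff (σ := Fin 2) (R := L) (Finsupp.single 0 1)).restrictScalars K)))
        + ((X 1 : MvPolynomial (Fin 2) L) • (j.toLinearMap ∘ₗ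
            ((MvPolynomial.lcoeff (σ := Fin 2) (R := L) (Finsupp.single 1 1)).restrictScalars K))) := by
      apply LinearMap.ext
      intro p
      show emm L 0 p + emm L 1 p = _
      simp only [emm, LinearMap.smulRight_apply, LinearMap.add_apply, LinearMap.smul_apply,
        LinearMap.comp_apply, LinearMap.restrictScalars_apply]
      rw [MvPolynomial.smul_eq_C_mul, MvPolynomial.smul_eq_C_mul, smul_eq_mul, smul_eq_mul,
        mul_comm ((X 0 : MvPolynomial (Fin 2) L)), mul_comm ((X 1 : MvPolynomial (Fin 2) L))]
      rfl
    rw [h3, LinearMap.rTensor_add, LinearMap.add_apply,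
      rTensor_smul_linearMap (K := K), rTensor_smul_linearMap (K := K)] at h1
    simp only [LinearMap.rTensor_comp, LinearMap.coe_comp, Function.comp_apply] at h1
    exact h1.symm
  refine ⟨LinearMap.rTensor B ((MvPolynomial.lcoeff (σ := Fin 2) (R := L)
      (Finsupp.single 0 1)).restrictScalars K) P,
    LinearMap.rTensor B ((MvPolynomial.lcoeff (σ := Fin 2) (R := L)
      (Finsupp.single 1 1)).restrictScalars K) P, ?_⟩
  intro s t
  rw [hA s t]
  conv_lhs => rw [hPP]
  have hevjr : ∀ y : L ⊗[K] B, LinearMap.rTensor B (ev s t).toLinearMap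
      (LinearMap.rTensor B j.toLinearMap y) = y := by
    intro y
    rw [← LinearMap.comp_apply, ← LinearMap.rTensor_comp, hevj, LinearMap.rTensor_id,
      LinearMap.id_apply]
  rw [map_add, rTensor_algHom_smul (K := K) (ev s t), rTensor_algHom_smul (K := K) (ev s t),
    hevjr, hevjr]
  have e0 : (ev s t) (X 0) = s := by
    show (MvPolynomial.aeval (R := L) ![s, t]) (X 0) = s
    rw [MvPolynomial.aeval_X]; rfl
  have e1 : (ev s t) (X 1 : MvPolynomial (Fin 2) L) = t := by
    show (MvPolynomial.aeval (R := L) ![s, t]) (X 1 : MvPolynomial (Fin 2) L) = t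
    rw [MvPolynomial.aeval_X]; rfl
  rw [e0, e1]

theorem PolynomialLaw'.map_add_of_one {K : Type} [CommRing K] {A B : Type}
    [AddCommGroup A] [Module K A] [AddCommGroup B] [Module K B]
    (φ : PolynomialLaw' K A B) (hφ : φ.IsHomogeneous 1)
    (L : Type) [CommRing L] [Algebra K L] (u v : L ⊗[K] A) :
    φ.toFun L (u + v) = φ.toFun L u + φ.toFun L v := by
  obtain ⟨q₀, q₁, hq⟩ := φ.one_aux hφ L u v
  have h11 := hq 1 1
  have h10 := hq 1 0
  have h01 := hq 0 1
  simp only [one_smul, zero_smul, add_zero, zero_add] at h11 h10 h01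
  rw [h11, h10, h01]

/-- a polynomial law homogeneous of degree `1` is linear: each `φ_L` is
an `L`-module homomorphism, and `φ` is determined by the `K`-linear map `φ_K : A → B`
(identifying `K ⊗[K] A` with `A`). -/
theorem polynomialLaw_homogeneous_one_is_linear
    (K : Type) [CommRing K] (A B : Type)
    [AddCommGroup A] [Module K A] [AddCommGroup B] [Module K B]
    (φ : PolynomialLaw' K A B) (hφ : φ.IsHomogeneous 1) :
    (∀ (L : Type) [CommRing L] [Algebra K L],
      ∃ g : L ⊗[K] A →ₗ[L] L ⊗[K] B, ∀ x : L ⊗[K] A, φ.toFun L x = g x) ∧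
    (∀ ψ : PolynomialLaw' K A B, ψ.IsHomogeneous 1 →
      (∀ a : A, φ.toFun K ((TensorProduct.lid K A).symm a)
        = ψ.toFun K ((TensorProduct.lid K A).symm a)) → φ = ψ) := by
  constructor
  · intro L _ _
    refine ⟨⟨⟨φ.toFun L, fun u v => φ.map_add_of_one hφ L u v⟩,
      fun l x => by simpa using hφ L l x⟩, fun x => rfl⟩
  · intro ψ hψ h
    have key : ∀ (L : Type) [CommRing L] [Algebra K L] (x : L ⊗[K] A),
        φ.toFun L x = ψ.toFun L x := by
      intro L _ _ x
      induction x using TensorProduct.induction_on with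
      | zero =>
          have h1 : φ.toFun L ((0 : L) • (0 : L ⊗[K] A)) = (0:L) ^ 1 • φ.toFun L 0 := hφ L 0 0
          have h2 : ψ.toFun L ((0 : L) • (0 : L ⊗[K] A)) = (0:L) ^ 1 • ψ.toFun L 0 := hψ L 0 0
          simp only [zero_smul, pow_one] at h1 h2
          rw [h1, h2]
      | tmul l a =>
          have hl : (l ⊗ₜ[K] a : L ⊗[K] A) = l • ((1:L) ⊗ₜ[K] a) := by
            rw [smul_tmul']; simp
          have e1 : ((1:L) ⊗ₜ[K] a : L ⊗[K] A)
              = LinearMap.rTensor A (Algebra.ofId K L).toLinearMap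
                  ((TensorProduct.lid K A).symm a) := by
            simp [TensorProduct.lid_symm_apply, Algebra.ofId_apply]
          have c1 := φ.isCompat K L (Algebra.ofId K L) ((TensorProduct.lid K A).symm a)
          have c2 := ψ.isCompat K L (Algebra.ofId K L) ((TensorProduct.lid K A).symm a)
          rw [hl, hφ L l, hψ L l, e1, ← c1, ← c2, h a]
      | add x y hx hy =>
          rw [φ.map_add_of_one hφ L x y, ψ.map_add_of_one hψ L x y, hx, hy]
    have htf : φ.toFun = ψ.toFun := by
      funext L _ _ x
      exact key L x
    cases φ; cases ψ
    simp only at htf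
    subst htf
    rfl
end
end

section
/- For a polynomial law φ : A → B and a finite family (a_s)_{s∈S} of elements of A, there exist unique coefficients φ_ξ((a_s)) ∈ B indexed by ξ ∈ ℕ^(S) such that for every commutative K-algebra R and elements (r_s)_{s∈S} ⊂ R, one has φ_R(Σ_s r_s ⊗ a_s) = Σ_ξ r^ξ ⊗ φ_ξ((a_s)), where r^ξ = Π_s r_s^{ξ_s}. -/
open TensorProduct

open Classical in
noncomputable def MvPolynomial.scalarRTensor {K : Type} [CommRing K] {B : Type}
    [AddCommGroup B] [Module K B] {S : Type} :
    MvPolynomial S K ⊗[K] B ≃ₗ[K] ((S →₀ ℕ) →₀ B) :=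
  (LinearEquiv.rTensor B (MvPolynomial.basisMonomials S K).repr).trans
    (TensorProduct.finsuppScalarLeft K B (S →₀ ℕ))

theorem MvPolynomial.scalarRTensor_symm_apply_single {K : Type} [CommRing K] {B : Type}
    [AddCommGroup B] [Module K B] {S : Type} (ξ : S →₀ ℕ) (b : B) :
    (MvPolynomial.scalarRTensor : MvPolynomial S K ⊗[K] B ≃ₗ[K] ((S →₀ ℕ) →₀ B)).symm
      (Finsupp.single ξ b) = MvPolynomial.monomial ξ 1 ⊗ₜ[K] b := by
  simp only [MvPolynomial.scalarRTensor, LinearEquiv.trans_symm, LinearEquiv.trans_apply,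
    TensorProduct.finsuppScalarLeft_symm_apply_single, LinearEquiv.rTensor_symm_tmul,
    Module.Basis.repr_symm_single, one_smul, MvPolynomial.coe_basisMonomials]

private lemma scalarRTensor_symm_eq_sum {K : Type} [CommRing K] {B : Type}
    [AddCommGroup B] [Module K B] {S : Type} [DecidableEq S] (d : (S →₀ ℕ) →₀ B) :
    (MvPolynomial.scalarRTensor : MvPolynomial S K ⊗[K] B ≃ₗ[K] ((S →₀ ℕ) →₀ B)).symm d
      = d.sum fun ξ b => MvPolynomial.monomial ξ 1 ⊗ₜ[K] b := by
  induction d using Finsupp.induction_linear with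
  | zero => simp
  | add f g hf hg =>
      rw [map_add, hf, hg, Finsupp.sum_add_index] <;> simp [TensorProduct.tmul_add]
  | single ξ b =>
      rw [MvPolynomial.scalarRTensor_symm_apply_single, Finsupp.sum_single_index (by simp)]

/-- existence and uniqueness of the coefficients of a polynomial law on a
finite family `(a_s)_{s ∈ S}`: a finitely supported family `c : (S →₀ ℕ) →₀ B` such that
`φ_R (Σ_s r_s ⊗ a_s) = Σ_ξ r^ξ ⊗ c_ξ` for every commutative `K`-algebra `R` and every
family `(r_s) ⊂ R`. -/
theorem polynomialLaw_coefficients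
    (K : Type) [CommRing K] (A B : Type)
    [AddCommGroup A] [Module K A] [AddCommGroup B] [Module K B]
    (φ : PolynomialLaw' K A B) (S : Type) [Fintype S] (a : S → A) :
    ∃! c : (S →₀ ℕ) →₀ B,
      ∀ (R : Type) [CommRing R] [Algebra K R] (r : S → R),
        φ.toFun R (∑ s : S, r s ⊗ₜ[K] a s)
          = c.sum fun ξ b => (∏ s : S, r s ^ ξ s) ⊗ₜ[K] b := by
  classical
  set t : MvPolynomial S K ⊗[K] B :=
    φ.toFun (MvPolynomial S K) (∑ s : S, MvPolynomial.X s ⊗ₜ[K] a s) with ht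
  set c : (S →₀ ℕ) →₀ B := MvPolynomial.scalarRTensor t with hc
  have hmon : ∀ ξ : S →₀ ℕ,
      (∏ s : S, (MvPolynomial.X s : MvPolynomial S K) ^ ξ s)
        = MvPolynomial.monomial ξ 1 := fun ξ => by
    rw [MvPolynomial.monomial_eq, map_one, one_mul, Finsupp.prod_pow]
  have htc : t = c.sum fun ξ b => MvPolynomial.monomial ξ 1 ⊗ₜ[K] b := by
    rw [← scalarRTensor_symm_eq_sum, hc, LinearEquiv.symm_apply_apply]
  have h3 : ∀ (d : (S →₀ ℕ) →₀ B),
      MvPolynomial.scalarRTensor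
        (d.sum fun ξ b => (∏ s : S, (MvPolynomial.X s : MvPolynomial S K) ^ ξ s) ⊗ₜ[K] b)
        = d := by
    intro d
    simp_rw [hmon]
    rw [← scalarRTensor_symm_eq_sum, LinearEquiv.apply_symm_apply]
  have key : ∀ (R : Type) [CommRing R] [Algebra K R] (r : S → R),
      φ.toFun R (∑ s : S, r s ⊗ₜ[K] a s)
        = c.sum fun ξ b => (∏ s : S, r s ^ ξ s) ⊗ₜ[K] b := by
    intro R _ _ r
    have hnat := φ.isCompat (MvPolynomial S K) R (MvPolynomial.aeval r)
      (∑ s : S, MvPolynomial.X s ⊗ₜ[K] a s)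
    have h1 : (LinearMap.rTensor A (MvPolynomial.aeval r).toLinearMap)
        (∑ s : S, MvPolynomial.X s ⊗ₜ[K] a s) = ∑ s : S, r s ⊗ₜ[K] a s := by
      rw [map_sum]
      exact Finset.sum_congr rfl fun s _ => by
        simp [LinearMap.rTensor_tmul]
    rw [h1] at hnat
    rw [← hnat, ← ht, htc, Finsupp.sum, map_sum, Finsupp.sum]
    refine Finset.sum_congr rfl fun ξ _ => ?_
    rw [LinearMap.rTensor_tmul]
    congr 1
    simp only [AlgHom.toLinearMap_apply, MvPolynomial.aeval_monomial, map_one, one_mul]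
    exact Finsupp.prod_pow ξ r
  refine ⟨c, key, fun c' hc' => ?_⟩
  have heq := (hc' (MvPolynomial S K) MvPolynomial.X).symm.trans
    (key (MvPolynomial S K) MvPolynomial.X)
  rw [← h3 c', heq, h3 c]
end

section
/- If φ : A → B is a polynomial law homogeneous of degree n, then all its coefficients φ_ξ((a_s)) vanish unless |ξ| = Σ_s ξ(s) equals n. -/
open TensorProduct

section
variable {K : Type} [CommRing K] {B : Type} [AddCommGroup B] [Module K B]
variable {S : Type} [Fintype S]

noncomputable def coeffAt (τ : Type) (d : τ →₀ ℕ) :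
    MvPolynomial τ K ⊗[K] B →ₗ[K] B :=
  (TensorProduct.lid K B).toLinearMap ∘ₗ LinearMap.rTensor B (MvPolynomial.lcoeff K d)

lemma coeffAt_tmul (τ : Type) (d : τ →₀ ℕ) (p : MvPolynomial τ K) (b : B) :
    coeffAt τ d (p ⊗ₜ[K] b) = MvPolynomial.coeff d p • b := by
  simp [coeffAt, MvPolynomial.lcoeff]

lemma prod_X_pow (τ : Type) (g : S → τ) (ξ : S →₀ ℕ) :
    (∏ s : S, (MvPolynomial.X (g s) : MvPolynomial τ K) ^ ξ s)
      = MvPolynomial.monomial (∑ s : S, Finsupp.single (g s) (ξ s)) 1 := by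
  simp only [MvPolynomial.X_pow_eq_monomial]
  rw [MvPolynomial.monomial_sum_one]
end


/-- if `φ` is homogeneous of degree `n`, then all the coefficients
`φ_ξ((a_s))` of `φ` (defined by the universal expansion property, cf. Statement 2)
vanish unless `|ξ| = Σ_s ξ s = n`. -/
theorem polynomialLaw_homogeneous_coefficients_vanish
    (K : Type) [CommRing K] (A B : Type)
    [AddCommGroup A] [Module K A] [AddCommGroup B] [Module K B]
    (φ : PolynomialLaw' K A B) (n : ℕ) (hφ : φ.IsHomogeneous n)
    (S : Type) [Fintype S] (a : S → A) (c : (S →₀ ℕ) →₀ B)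
    (hc : ∀ (R : Type) [CommRing R] [Algebra K R] (r : S → R),
      φ.toFun R (∑ s : S, r s ⊗ₜ[K] a s)
        = c.sum fun ξ b => (∏ s : S, r s ^ ξ s) ⊗ₜ[K] b) :
    ∀ ξ : S →₀ ℕ, (∑ s : S, ξ s) ≠ n → c ξ = 0 := by
  classical
  intro ξ₀ hξ₀
  set D : (S →₀ ℕ) → ℕ → (Option S →₀ ℕ) :=
    fun ξ m => Finsupp.single none m + ∑ s : S, Finsupp.single (some s) (ξ s) with hD
  have hD_some : ∀ ξ m t, D ξ m (some t) = ξ t := by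
    intro ξ m t
    simp [hD, Finsupp.finset_sum_apply, Finsupp.single_apply]
  have hD_none : ∀ ξ m, D ξ m none = m := by
    intro ξ m
    simp [hD, Finsupp.finset_sum_apply, Finsupp.single_apply]
  have hDinj : ∀ ξ m ξ' m', D ξ m = D ξ' m' → ξ = ξ' ∧ m = m' := by
    intro ξ m ξ' m' h
    constructor
    · ext t; rw [← hD_some ξ m t, h, hD_some]
    · rw [← hD_none ξ m, h, hD_none]
  have h1 := hc (MvPolynomial (Option S) K) (fun s => MvPolynomial.X none * MvPolynomial.X (some s))
  have h2 := hc (MvPolynomial (Option S) K) (fun s => MvPolynomial.X (some s))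
  have hsmul : (∑ s : S, (MvPolynomial.X none * MvPolynomial.X (some s) : MvPolynomial (Option S) K) ⊗ₜ[K] a s)
      = (MvPolynomial.X none : MvPolynomial (Option S) K) • ∑ s : S, (MvPolynomial.X (some s) : MvPolynomial (Option S) K) ⊗ₜ[K] a s := by
    rw [Finset.smul_sum]
    simp [smul_tmul', smul_eq_mul]
  rw [hsmul, hφ _ (MvPolynomial.X none) _, h2, Finsupp.smul_sum] at h1
  have hLHS : ∀ ξ : S →₀ ℕ,
      (∏ s : S, (MvPolynomial.X none * MvPolynomial.X (some s) : MvPolynomial (Option S) K) ^ ξ s)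
        = MvPolynomial.monomial (D ξ (∑ s : S, ξ s)) 1 := by
    intro ξ
    have hmp : ∀ s : S, (MvPolynomial.X none * MvPolynomial.X (some s) : MvPolynomial (Option S) K) ^ ξ s
        = MvPolynomial.X none ^ ξ s * MvPolynomial.X (some s) ^ ξ s := by
      intro s; rw [mul_pow]
    simp only [hmp]
    rw [Finset.prod_mul_distrib, Finset.prod_pow_eq_pow_sum,
      MvPolynomial.X_pow_eq_monomial, prod_X_pow, MvPolynomial.monomial_mul, one_mul, hD]
  have hRHS : ∀ ξ : S →₀ ℕ,
      ((MvPolynomial.X none : MvPolynomial (Option S) K) ^ n • ((∏ s : S, (MvPolynomial.X (some s) : MvPolynomial (Option S) K) ^ ξ s) ⊗ₜ[K] c ξ))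
        = (MvPolynomial.monomial (D ξ n) 1 : MvPolynomial (Option S) K) ⊗ₜ[K] c ξ := by
    intro ξ
    rw [smul_tmul', smul_eq_mul, prod_X_pow, MvPolynomial.X_pow_eq_monomial,
      MvPolynomial.monomial_mul, one_mul, hD]
  simp only [Finsupp.sum, hLHS] at h1
  simp only [hRHS] at h1
  set d₀ := D ξ₀ (∑ s : S, ξ₀ s) with hd₀
  have key := congrArg (coeffAt (K := K) (B := B) (Option S) d₀) h1
  rw [map_sum, map_sum] at key
  simp only [coeffAt_tmul, MvPolynomial.coeff_monomial, ite_smul, one_smul, zero_smul] at key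
  have hz : (∑ x ∈ c.support, if D x n = d₀ then c x else 0) = 0 := by
    apply Finset.sum_eq_zero
    intro x _
    rw [if_neg]
    intro h
    exact hξ₀ (((hDinj _ _ _ _ h).2).symm.trans rfl) |>.elim
  have ho : (∑ x ∈ c.support, if D x (∑ s : S, x s) = d₀ then c x else 0) = c ξ₀ := by
    by_cases hmem : ξ₀ ∈ c.support
    · rw [Finset.sum_eq_single ξ₀]
      · rw [if_pos hd₀.symm]
      · intro x _ hne
        rw [if_neg]
        intro h
        exact hne (hDinj _ _ _ _ h).1
      · intro h; exact absurd hmem h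
    · rw [Finset.sum_eq_zero, Finsupp.notMem_support_iff.mp hmem]
      intro x hx
      rw [if_neg]
      intro h
      exact Finsupp.mem_support_iff.mp hx (((hDinj _ _ _ _ h).1) ▸ Finsupp.notMem_support_iff.mp hmem)
  rw [hz, ho] at key
  exact key.symm
end

section
/- The divided power algebra functor commutes with base change: for any commutative K-algebra L and K-module M, there is an isomorphism of graded L-algebras Γ_L(L ⊗_K M) ≅ L ⊗_K Γ_K(M) sending (1⊗x)^(n) to 1 ⊗ x^(n). -/
open TensorProduct MvPolynomial

/-- The defining relations of the divided power algebra of the `K`-module `M`: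
`m^(0) = 1`, `(r • m)^(i) = r^i m^(i)`, `(m + m')^(k) = Σ_{i+j=k} m^(i) m'^(j)` and
`m^(i) m^(j) = C(i+j,i) m^(i+j)`. -/
inductive DPRel (K : Type) [CommRing K] (M : Type) [AddCommGroup M] [Module K M] :
    MvPolynomial (M × ℕ) K → MvPolynomial (M × ℕ) K → Prop
  | zero (m : M) : DPRel K M (X (m, 0)) 1
  | smul (r : K) (m : M) (i : ℕ) : DPRel K M (X (r • m, i)) (C (r ^ i) * X (m, i))
  | add (m m' : M) (k : ℕ) :
      DPRel K M (X (m + m', k))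
        (∑ ij ∈ Finset.HasAntidiagonal.antidiagonal k, X (m, ij.1) * X (m', ij.2))
  | mul (m : M) (i j : ℕ) :
      DPRel K M (X (m, i) * X (m, j)) ((((i + j).choose i : ℕ) : MvPolynomial (M × ℕ) K) * X (m, i + j))

/-- The divided power algebra `Γ(M)` of a `K`-module `M`, presented by generators
`m^(i)` (`m ∈ M`, `i ∈ ℕ`) and the divided power relations. -/
abbrev DividedPowerAlgebra' (K : Type) [CommRing K] (M : Type) [AddCommGroup M] [Module K M] :=
  MvPolynomial (M × ℕ) K ⧸
    Ideal.span {p : MvPolynomial (M × ℕ) K | ∃ a b, DPRel K M a b ∧ p = a - b}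

/-- The divided power `m^(i)` in `Γ(M)`. -/
noncomputable def dp (K : Type) [CommRing K] {M : Type} [AddCommGroup M] [Module K M]
    (m : M) (i : ℕ) : DividedPowerAlgebra' K M :=
  Ideal.Quotient.mk _ (X (m, i))

/-- The degree-`n` homogeneous component `Γ_n(M)` of the divided power algebra: the
`K`-submodule spanned by products `Π_i x_i^(α_i)` with `Σ_i α_i = n`. -/
noncomputable def gammaComp (K : Type) [CommRing K] (M : Type) [AddCommGroup M] [Module K M]
    (n : ℕ) : Submodule K (DividedPowerAlgebra' K M) :=
  Submodule.span K {x | ∃ l : List (M × ℕ),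
    (l.map Prod.snd).sum = n ∧ x = (l.map fun p => dp K p.1 p.2).prod}

section Basic

variable {R : Type} [CommRing R] {N : Type} [AddCommGroup N] [Module R N]

theorem DPRel.quot_eq {a b : MvPolynomial (N × ℕ) R} (h : DPRel R N a b) :
    (Ideal.Quotient.mk _ a : DividedPowerAlgebra' R N) = Ideal.Quotient.mk _ b := by
  rw [Ideal.Quotient.eq]
  exact Ideal.subset_span ⟨a, b, h, rfl⟩

theorem dp_eq_mkₐ (m : N) (i : ℕ) :
    dp R m i = Ideal.Quotient.mkₐ R _ (X (m, i)) := rfl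

theorem dp_zero (m : N) : dp R m 0 = 1 := by
  simpa [dp] using (DPRel.zero (K := R) (M := N) m).quot_eq

theorem dp_smul (r : R) (m : N) (i : ℕ) : dp R (r • m) i = r ^ i • dp R m i := by
  have h := (DPRel.smul (K := R) (M := N) r m i).quot_eq
  rw [dp, h, ← MvPolynomial.smul_eq_C_mul]
  exact map_smul (Ideal.Quotient.mkₐ R _) _ _

theorem dp_add (m m' : N) (k : ℕ) :
    dp R (m + m') k = ∑ ij ∈ Finset.HasAntidiagonal.antidiagonal k, dp R m ij.1 * dp R m' ij.2 := by
  have := (DPRel.add (K := R) (M := N) m m' k).quot_eq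
  rw [map_sum] at this
  simpa [dp] using this

theorem dp_mul (m : N) (i j : ℕ) :
    dp R m i * dp R m j = ((i + j).choose i : DividedPowerAlgebra' R N) * dp R m (i + j) := by
  have := (DPRel.mul (K := R) (M := N) m i j).quot_eq
  rw [map_mul, map_mul, map_natCast] at this
  simpa [dp] using this

theorem dp_null (n : ℕ) : dp R (0 : N) (n + 1) = 0 := by
  have := dp_smul (0 : R) (0 : N) (n + 1)
  simpa using this

end Basic

theorem dp_key_sum {A : Type*} [CommRing A] (u v : ℕ → A) (i j : ℕ) :
    ∑ x ∈ Finset.HasAntidiagonal.antidiagonal i, ∑ y ∈ Finset.HasAntidiagonal.antidiagonal j,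
      (((x.1 + y.1).choose x.1 : ℕ) : A) * (((x.2 + y.2).choose x.2 : ℕ) : A) *
        (u (x.1 + y.1) * v (x.2 + y.2))
    = (((i + j).choose i : ℕ) : A) *
        ∑ p ∈ Finset.HasAntidiagonal.antidiagonal (i + j), u p.1 * v p.2 := by
  classical
  rw [Finset.mul_sum]
  have hrhs : ∀ p ∈ Finset.HasAntidiagonal.antidiagonal (i + j),
      (((i + j).choose i : ℕ) : A) * (u p.1 * v p.2)
      = ∑ x ∈ Finset.HasAntidiagonal.antidiagonal i,
          ((p.1.choose x.1 : ℕ) : A) * ((p.2.choose x.2 : ℕ) : A) * (u p.1 * v p.2) := by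
    intro p hp
    rw [Finset.HasAntidiagonal.mem_antidiagonal] at hp
    have : (i + j).choose i = ∑ x ∈ Finset.HasAntidiagonal.antidiagonal i, p.1.choose x.1 * p.2.choose x.2 := by
      rw [← hp, Nat.add_choose_eq]
    rw [this]
    push_cast
    rw [Finset.sum_mul]
  rw [Finset.sum_congr rfl hrhs]
  rw [← Finset.sum_product', ← Finset.sum_product']
  rw [← Finset.sum_filter_add_sum_filter_not (Finset.HasAntidiagonal.antidiagonal (i + j) ×ˢ Finset.HasAntidiagonal.antidiagonal i)
    (fun w => w.2.1 ≤ w.1.1 ∧ w.2.2 ≤ w.1.2)]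
  have hzero : ∑ w ∈ (Finset.HasAntidiagonal.antidiagonal (i + j) ×ˢ Finset.HasAntidiagonal.antidiagonal i).filter
      (fun w => ¬(w.2.1 ≤ w.1.1 ∧ w.2.2 ≤ w.1.2)),
      ((w.1.1.choose w.2.1 : ℕ) : A) * ((w.1.2.choose w.2.2 : ℕ) : A) * (u w.1.1 * v w.1.2) = 0 := by
    apply Finset.sum_eq_zero
    intro w hw
    rw [Finset.mem_filter] at hw
    rcases not_and_or.mp hw.2 with h | h
    · rw [Nat.choose_eq_zero_of_lt (by omega)]; simp
    · rw [show w.1.2.choose w.2.2 = 0 from Nat.choose_eq_zero_of_lt (by omega)]; simp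
  rw [hzero, add_zero]
  symm
  apply Finset.sum_nbij' (i := fun w => (w.2, (w.1.1 - w.2.1, w.1.2 - w.2.2)))
    (j := fun z => ((z.1.1 + z.2.1, z.1.2 + z.2.2), z.1))
  · intro w hw
    simp only [Finset.mem_filter, Finset.mem_product, Finset.HasAntidiagonal.mem_antidiagonal] at hw
    simp only [Finset.mem_product, Finset.HasAntidiagonal.mem_antidiagonal]
    exact ⟨hw.1.2, by omega⟩
  · intro z hz
    simp only [Finset.mem_product, Finset.HasAntidiagonal.mem_antidiagonal] at hz
    simp only [Finset.mem_filter, Finset.mem_product, Finset.HasAntidiagonal.mem_antidiagonal]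
    refine ⟨⟨by omega, hz.1⟩, by omega, by omega⟩
  · intro w hw
    simp only [Finset.mem_filter, Finset.mem_product, Finset.HasAntidiagonal.mem_antidiagonal] at hw
    obtain ⟨⟨h1, h2⟩, h3, h4⟩ := hw
    ext <;> simp <;> omega
  · intro z hz
    ext <;> simp
  · intro w hw
    simp only [Finset.mem_filter, Finset.mem_product, Finset.HasAntidiagonal.mem_antidiagonal] at hw
    obtain ⟨⟨h1, h2⟩, h3, h4⟩ := hw
    have e1 : w.2.1 + (w.1.1 - w.2.1) = w.1.1 := by omega
    have e2 : w.2.2 + (w.1.2 - w.2.2) = w.1.2 := by omega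
    simp only [e1, e2]

theorem sum_antidiagonal_pow_mul {A : Type*} [CommRing A] (c : A) (n : ℕ) (u v u' v' : ℕ → A)
    (hu : ∀ k, u' k = c ^ k * u k) (hv : ∀ k, v' k = c ^ k * v k) :
    ∑ p ∈ Finset.HasAntidiagonal.antidiagonal n, u' p.1 * v' p.2
      = c ^ n * ∑ p ∈ Finset.HasAntidiagonal.antidiagonal n, u p.1 * v p.2 := by
  rw [Finset.mul_sum]
  refine Finset.sum_congr rfl fun p hp => ?_
  rw [Finset.HasAntidiagonal.mem_antidiagonal] at hp
  rw [hu, hv, mul_mul_mul_comm, ← pow_add, hp]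

theorem sum_antidiagonal_choose_mul {A : Type*} [CommRing A] (u v : ℕ → A) (i j : ℕ)
    (hu : ∀ a b, u a * u b = (((a + b).choose a : ℕ) : A) * u (a + b))
    (hv : ∀ a b, v a * v b = (((a + b).choose a : ℕ) : A) * v (a + b)) :
    (∑ x ∈ Finset.HasAntidiagonal.antidiagonal i, u x.1 * v x.2)
        * (∑ y ∈ Finset.HasAntidiagonal.antidiagonal j, u y.1 * v y.2)
      = (((i + j).choose i : ℕ) : A) * ∑ p ∈ Finset.HasAntidiagonal.antidiagonal (i + j), u p.1 * v p.2 := by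
  rw [Finset.sum_mul_sum]
  have inner : ∀ x ∈ Finset.HasAntidiagonal.antidiagonal i, ∀ y ∈ Finset.HasAntidiagonal.antidiagonal j,
      (u x.1 * v x.2) * (u y.1 * v y.2)
        = (((x.1 + y.1).choose x.1 : ℕ) : A) * (((x.2 + y.2).choose x.2 : ℕ) : A)
          * (u (x.1 + y.1) * v (x.2 + y.2)) := by
    intro x _ y _
    rw [mul_mul_mul_comm, hu, hv]
    ring
  rw [Finset.sum_congr rfl fun x hx => Finset.sum_congr rfl fun y hy => inner x hx y hy]
  exact dp_key_sum u v i j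

theorem sum_antidiagonal_zero_ones {A : Type*} [CommRing A] (u v : ℕ → A)
    (hu : u 0 = 1) (hv : v 0 = 1) :
    ∑ p ∈ Finset.HasAntidiagonal.antidiagonal 0, u p.1 * v p.2 = 1 := by
  rw [Finset.Nat.antidiagonal_zero, Finset.sum_singleton, hu, hv, one_mul]

section MulLift

variable {R M N P : Type*} [CommSemiring R] [AddCommMonoid M] [Module R M]
  [AddCommMonoid N] [Module R N] [CommMonoid P]

/-- Lift a bi-"exponential" map `M → N → P` (additive-to-multiplicative in each variable,
`R`-balanced) to an additive-to-multiplicative map on `M ⊗[R] N`. -/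
noncomputable def mulLift (f : M → N → P)
    (hMadd : ∀ m m' n, f (m + m') n = f m n * f m' n)
    (hN0 : ∀ m, f m 0 = 1)
    (hNadd : ∀ m n n', f m (n + n') = f m n * f m n')
    (hsmul : ∀ (r : R) m n, f (r • m) n = f m (r • n)) :
    M ⊗[R] N →+ Additive P :=
  TensorProduct.liftAddHom
    { toFun := fun m =>
        { toFun := fun n => Additive.ofMul (f m n)
          map_zero' := congrArg Additive.ofMul (hN0 m)
          map_add' := fun n n' => congrArg Additive.ofMul (hNadd m n n') }
      map_zero' := AddMonoidHom.ext fun n => by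
        have h := hsmul 0 0 n
        rw [zero_smul, zero_smul] at h
        show Additive.ofMul (f 0 n) = 0
        rw [h, hN0]
        rfl
      map_add' := fun m m' => AddMonoidHom.ext fun n =>
        congrArg Additive.ofMul (hMadd m m' n) }
    (fun r m n => congrArg Additive.ofMul (hsmul r m n))

@[simp] theorem mulLift_tmul (f : M → N → P) (h1 h2 h3 h4) (m : M) (n : N) :
    mulLift (R := R) f h1 h2 h3 h4 (m ⊗ₜ n) = Additive.ofMul (f m n) := by
  rw [mulLift, TensorProduct.liftAddHom_tmul]
  rfl

end MulLift

section BaseChangeA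

variable {K : Type} [CommRing K] {L : Type} [CommRing L] [Algebra K L]
  {M : Type} [AddCommGroup M] [Module K M]

/-- The exponential power series `Σ ℓ^n ⊗ x^(n) Tⁿ`. -/
noncomputable def expF (ℓ : L) (x : M) : PowerSeries (L ⊗[K] DividedPowerAlgebra' K M) :=
  PowerSeries.mk fun n => (ℓ ^ n) ⊗ₜ[K] dp K x n

@[simp] theorem expF_coeff (ℓ : L) (x : M) (n : ℕ) :
    PowerSeries.coeff n (expF (K := K) ℓ x) = (ℓ ^ n) ⊗ₜ[K] dp K x n :=
  PowerSeries.coeff_mk _ _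

theorem expF_add_right (ℓ : L) (x y : M) :
    expF (K := K) ℓ (x + y) = expF ℓ x * expF ℓ y := by
  ext n
  rw [PowerSeries.coeff_mul]
  simp only [expF_coeff, dp_add, tmul_sum]
  refine Finset.sum_congr rfl fun p hp => ?_
  rw [Finset.HasAntidiagonal.mem_antidiagonal] at hp
  rw [Algebra.TensorProduct.tmul_mul_tmul, ← pow_add, hp]

theorem expF_add_left (ℓ ℓ' : L) (x : M) :
    expF (K := K) (ℓ + ℓ') x = expF ℓ x * expF ℓ' x := by
  ext n
  rw [PowerSeries.coeff_mul]
  simp only [expF_coeff]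
  have : ∀ p ∈ Finset.HasAntidiagonal.antidiagonal n,
      ((ℓ ^ p.1) ⊗ₜ[K] dp K x p.1) * ((ℓ' ^ p.2) ⊗ₜ[K] dp K x p.2)
        = (ℓ ^ p.1 * ℓ' ^ p.2 * (n.choose p.1 : L)) ⊗ₜ[K] dp K x n := by
    intro p hp
    rw [Finset.HasAntidiagonal.mem_antidiagonal] at hp
    rw [Algebra.TensorProduct.tmul_mul_tmul, dp_mul, hp, ← nsmul_eq_mul, tmul_smul,
      smul_tmul', nsmul_eq_mul]
    ring_nf
  rw [Finset.sum_congr rfl this, ← sum_tmul,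
    Finset.Nat.sum_antidiagonal_eq_sum_range_succ_mk, ← add_pow]

theorem expF_smul (r : K) (ℓ : L) (x : M) :
    expF (K := K) ℓ (r • x) = expF (r • ℓ) x := by
  ext n
  simp only [expF_coeff, dp_smul, tmul_smul, smul_tmul', smul_pow]

theorem expF_zero_right (ℓ : L) : expF (K := K) (M := M) ℓ 0 = 1 := by
  ext n
  rcases n with _ | n
  · simp [dp_zero, Algebra.TensorProduct.one_def]
  · simp [dp_null]

theorem expF_zero_left (x : M) : expF (K := K) (L := L) 0 x = 1 := by
  ext n
  rcases n with _ | n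
  · simp [dp_zero, Algebra.TensorProduct.one_def]
  · simp


end BaseChangeA

section BaseChange2

variable {K : Type} [CommRing K] {L : Type} [CommRing L] [Algebra K L]
  {M : Type} [AddCommGroup M] [Module K M]

/-- The exponential, extended to the base-changed module. -/
noncomputable def expHom :
    L ⊗[K] M →+ Additive (PowerSeries (L ⊗[K] DividedPowerAlgebra' K M)) :=
  @mulLift K L M (PowerSeries (L ⊗[K] DividedPowerAlgebra' K M)) _ _ _ _ _ _
    (fun ℓ x => expF (K := K) ℓ x)
    (fun ℓ ℓ' x => expF_add_left ℓ ℓ' x)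
    (fun ℓ => expF_zero_right ℓ)
    (fun ℓ x y => expF_add_right ℓ x y)
    (fun r ℓ x => (expF_smul r ℓ x).symm)

set_option maxHeartbeats 1000000 in
/-- The divided power `δ_n(t)` in `L ⊗ Γ_K(M)` for `t : L ⊗ M`. -/
noncomputable def delta (t : L ⊗[K] M) (n : ℕ) : L ⊗[K] DividedPowerAlgebra' K M :=
  PowerSeries.coeff n
    (Additive.toMul (α := PowerSeries (L ⊗[K] DividedPowerAlgebra' K M)) (expHom t))

theorem delta_tmul (ℓ : L) (x : M) (n : ℕ) :
    delta (ℓ ⊗ₜ[K] x) n = (ℓ ^ n) ⊗ₜ[K] dp K x n := by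
  rw [delta, expHom, mulLift_tmul]
  exact expF_coeff ℓ x n

theorem delta_zero (n : ℕ) :
    delta (0 : L ⊗[K] M) n = if n = 0 then 1 else 0 := by
  rw [delta, map_zero]
  rcases n with _ | n <;> simp

theorem delta_add (t t' : L ⊗[K] M) (n : ℕ) :
    delta (t + t') n = ∑ p ∈ Finset.HasAntidiagonal.antidiagonal n, delta t p.1 * delta t' p.2 := by
  rw [delta, map_add]
  exact PowerSeries.coeff_mul _ _ _

end BaseChange2

section BaseChange3

variable {K : Type} [CommRing K] {L : Type} [CommRing L] [Algebra K L]
  {M : Type} [AddCommGroup M] [Module K M]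

set_option maxHeartbeats 1000000
set_option synthInstance.maxHeartbeats 500000

theorem delta_zero' (n : ℕ) (hn : n ≠ 0) : delta (0 : L ⊗[K] M) n = 0 := by
  rw [delta_zero, if_neg hn]

theorem delta_zeroth (t : L ⊗[K] M) : delta t 0 = 1 := by
  induction t using TensorProduct.induction_on with
  | zero => rw [delta_zero, if_pos rfl]
  | tmul ℓ x => rw [delta_tmul, pow_zero, dp_zero, Algebra.TensorProduct.one_def]
  | add t t' h h' =>
    rw [delta_add]
    exact sum_antidiagonal_zero_ones (delta t) (delta t') h h'

theorem tmul_natCast_mul (n : ℕ) (a : L) (b : DividedPowerAlgebra' K M) :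
    a ⊗ₜ[K] ((n : DividedPowerAlgebra' K M) * b)
      = (n : L ⊗[K] DividedPowerAlgebra' K M) * (a ⊗ₜ[K] b) := by
  induction n with
  | zero =>
    rw [Nat.cast_zero, Nat.cast_zero]
    have h0 : ((0 : DividedPowerAlgebra' K M)) * b = 0 := by ring
    rw [h0, tmul_zero]
    ring
  | succ n ih =>
    have h1 : ((n + 1 : ℕ) : DividedPowerAlgebra' K M) * b
        = (n : DividedPowerAlgebra' K M) * b + b := by push_cast; ring
    have h2 : ((n + 1 : ℕ) : L ⊗[K] DividedPowerAlgebra' K M) * (a ⊗ₜ[K] b)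
        = (n : L ⊗[K] DividedPowerAlgebra' K M) * (a ⊗ₜ[K] b) + a ⊗ₜ[K] b := by
      push_cast; ring
    rw [h1, tmul_add, ih, h2]

theorem delta_smul (ℓ : L) (t : L ⊗[K] M) (n : ℕ) :
    delta (ℓ • t) n
      = (@algebraMap L (L ⊗[K] DividedPowerAlgebra' K M) _ Algebra.TensorProduct.instSemiring _ ℓ) ^ n * delta t n := by
  induction t using TensorProduct.induction_on generalizing n with
  | zero =>
    rw [smul_zero]
    rcases n with _ | n
    · rw [delta_zeroth]
      ring
    · rw [delta_zero' (n + 1) (Nat.succ_ne_zero n)]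
      ring
  | tmul ℓ' x =>
    rw [smul_tmul', smul_eq_mul, delta_tmul, delta_tmul,
      Algebra.TensorProduct.algebraMap_apply, mul_pow]
    rw [show ((algebraMap L L ℓ) ⊗ₜ[K] (1 : DividedPowerAlgebra' K M)) ^ n
        = (ℓ ^ n) ⊗ₜ[K] (1 : DividedPowerAlgebra' K M) by
      rw [Algebra.algebraMap_self, RingHom.id_apply, Algebra.TensorProduct.tmul_pow, one_pow]]
    rw [Algebra.TensorProduct.tmul_mul_tmul, one_mul]
  | add t t' h h' =>
    rw [smul_add, delta_add, delta_add]
    exact sum_antidiagonal_pow_mul (A := L ⊗[K] DividedPowerAlgebra' K M) _ n _ _ _ _ (fun k => h k) (fun k => h' k)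

theorem delta_mul (t : L ⊗[K] M) (i j : ℕ) :
    delta t i * delta t j
      = (((i + j).choose i : ℕ) : L ⊗[K] DividedPowerAlgebra' K M) * delta t (i + j) := by
  induction t using TensorProduct.induction_on generalizing i j with
  | zero =>
    rcases i with _ | i
    · rcases j with _ | j
      · rw [delta_zeroth]
        norm_num
      · rw [delta_zeroth, delta_zero' (j + 1) (Nat.succ_ne_zero j),
          delta_zero' (0 + (j + 1)) (by omega)]
        ring
    · rcases j with _ | j
      · rw [delta_zeroth, delta_zero' (i + 1) (Nat.succ_ne_zero i)]
        ring
      · rw [delta_zero' (i + 1) (Nat.succ_ne_zero i), delta_zero' (j + 1) (Nat.succ_ne_zero j),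
          delta_zero' ((i + 1) + (j + 1)) (by omega)]
        ring
  | tmul ℓ x =>
    rw [delta_tmul, delta_tmul, delta_tmul, Algebra.TensorProduct.tmul_mul_tmul,
      ← pow_add, dp_mul, tmul_natCast_mul]
  | add t t' h h' =>
    rw [delta_add, delta_add, delta_add]
    exact sum_antidiagonal_choose_mul (delta t) (delta t') i j h h'

end BaseChange3

section Phi

variable {K : Type} [CommRing K] {L : Type} [CommRing L] [Algebra K L]
  {M : Type} [AddCommGroup M] [Module K M]

set_option maxHeartbeats 1000000
set_option synthInstance.maxHeartbeats 500000

theorem phi_aux :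
    ∀ a ∈ Ideal.span {p : MvPolynomial ((L ⊗[K] M) × ℕ) L |
      ∃ a b, DPRel L (L ⊗[K] M) a b ∧ p = a - b},
      aeval (R := L) (fun p : (L ⊗[K] M) × ℕ => delta p.1 p.2) a = 0 := by
  set F : MvPolynomial ((L ⊗[K] M) × ℕ) L →ₐ[L] L ⊗[K] DividedPowerAlgebra' K M :=
    aeval fun p : (L ⊗[K] M) × ℕ => delta p.1 p.2 with hF
  have hS : {p : MvPolynomial ((L ⊗[K] M) × ℕ) L |
      ∃ a b, DPRel L (L ⊗[K] M) a b ∧ p = a - b}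
        ⊆ (RingHom.ker F.toRingHom : Set (MvPolynomial ((L ⊗[K] M) × ℕ) L)) := by
    rintro p ⟨a, b, hrel, rfl⟩
    have : F a = F b := by
      cases hrel with
      | zero t => rw [hF]; simp only [aeval_X, map_one]; exact (delta_zeroth t).trans (aeval (R := L) fun p : (L ⊗[K] M) × ℕ => delta p.1 p.2).toRingHom.map_one.symm
      | smul ℓ t i =>
        rw [hF]; simp only [aeval_X, map_mul, aeval_C]
        rw [delta_smul, ← map_pow]
      | add t t' k =>
        rw [hF]; simp only [aeval_X, map_sum, map_mul]
        exact delta_add t t' k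
      | mul t i j =>
        rw [hF]; simp only [map_mul, aeval_X, map_natCast]
        exact delta_mul t i j
    rw [SetLike.mem_coe, RingHom.mem_ker, AlgHom.toRingHom_eq_coe, RingHom.coe_coe,
      map_sub, this, sub_self]
  intro a ha
  exact Ideal.span_le.mpr hS ha

/-- The forward map `Γ_L(L ⊗ M) → L ⊗ Γ_K(M)`. -/
noncomputable def phi :
    DividedPowerAlgebra' L (L ⊗[K] M) →ₐ[L] L ⊗[K] DividedPowerAlgebra' K M :=
  Ideal.Quotient.liftₐ _ (aeval fun p : (L ⊗[K] M) × ℕ => delta p.1 p.2) phi_aux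

theorem phi_dp (t : L ⊗[K] M) (n : ℕ) : phi (K := K) (dp L t n) = delta t n := by
  exact aeval_X (R := L) (f := fun p : (L ⊗[K] M) × ℕ => delta p.1 p.2) (t, n)

end Phi

section Psi

variable {K : Type} [CommRing K] {L : Type} [CommRing L] [Algebra K L]
  {M : Type} [AddCommGroup M] [Module K M]

set_option maxHeartbeats 1000000
set_option synthInstance.maxHeartbeats 500000

theorem psi0_aux :
    ∀ a ∈ Ideal.span {p : MvPolynomial (M × ℕ) K | ∃ a b, DPRel K M a b ∧ p = a - b},
      aeval (R := K) (fun p : M × ℕ =>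
        dp L ((1 : L) ⊗ₜ[K] p.1) p.2) a = 0 := by
  set F : MvPolynomial (M × ℕ) K →ₐ[K] DividedPowerAlgebra' L (L ⊗[K] M) :=
    aeval fun p : M × ℕ => dp L ((1 : L) ⊗ₜ[K] p.1) p.2 with hF
  have hS : {p : MvPolynomial (M × ℕ) K | ∃ a b, DPRel K M a b ∧ p = a - b}
      ⊆ (RingHom.ker F.toRingHom : Set (MvPolynomial (M × ℕ) K)) := by
    rintro p ⟨a, b, hrel, rfl⟩
    have : F a = F b := by
      cases hrel with
      | zero x => rw [hF]; simp only [aeval_X, map_one]; exact dp_zero _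
      | smul r x i =>
        rw [hF]; simp only [aeval_X, map_mul, aeval_C]
        have e1 : (1 : L) ⊗ₜ[K] (r • x) = (algebraMap K L r) • ((1 : L) ⊗ₜ[K] x) := by
          rw [tmul_smul, algebraMap_smul]
        rw [e1, dp_smul, ← map_pow]
        have e2 : (algebraMap K L (r ^ i)) • dp L ((1 : L) ⊗ₜ[K] x) i
            = algebraMap L (DividedPowerAlgebra' L (L ⊗[K] M)) (algebraMap K L (r ^ i))
              * dp L ((1 : L) ⊗ₜ[K] x) i := by
          rw [dp_eq_mkₐ, ← map_smul (Ideal.Quotient.mkₐ L _), MvPolynomial.smul_eq_C_mul,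
            ← MvPolynomial.algebraMap_eq, map_mul, AlgHom.commutes]
        rw [e2, ← IsScalarTower.algebraMap_apply K L (DividedPowerAlgebra' L (L ⊗[K] M))]
      | add x y k =>
        rw [hF]; simp only [aeval_X, map_sum, map_mul]
        have e1 : (1 : L) ⊗ₜ[K] (x + y) = (1 : L) ⊗ₜ[K] x + (1 : L) ⊗ₜ[K] y := tmul_add _ _ _
        rw [e1]
        exact dp_add _ _ k
      | mul x i j =>
        rw [hF]; simp only [map_mul, aeval_X, map_natCast]
        exact dp_mul _ i j
    rw [SetLike.mem_coe, RingHom.mem_ker, AlgHom.toRingHom_eq_coe, RingHom.coe_coe,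
      map_sub, this, sub_self]
  intro a ha
  exact Ideal.span_le.mpr hS ha

/-- `Γ_K(M) → Γ_L(L ⊗ M)` as `K`-algebra map. -/
noncomputable def psi0 :
    DividedPowerAlgebra' K M →ₐ[K] DividedPowerAlgebra' L (L ⊗[K] M) :=
  Ideal.Quotient.liftₐ _
    (aeval fun p : M × ℕ => dp L ((1 : L) ⊗ₜ[K] p.1) p.2) psi0_aux

theorem psi0_dp (x : M) (n : ℕ) :
    psi0 (L := L) (dp K x n) = dp L ((1 : L) ⊗ₜ[K] x) n :=
  aeval_X (R := K) (f := fun p : M × ℕ => dp L ((1 : L) ⊗ₜ[K] p.1) p.2) (x, n)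

/-- The backward map `L ⊗ Γ_K(M) → Γ_L(L ⊗ M)`. -/
noncomputable def psi :
    L ⊗[K] DividedPowerAlgebra' K M →ₐ[L] DividedPowerAlgebra' L (L ⊗[K] M) :=
  Algebra.TensorProduct.lift (Algebra.ofId L _) psi0 (fun _ _ => mul_comm _ _)

theorem psi_tmul (ℓ : L) (γ : DividedPowerAlgebra' K M) :
    psi (K := K) (M := M) (ℓ ⊗ₜ[K] γ)
      = algebraMap L (DividedPowerAlgebra' L (L ⊗[K] M)) ℓ * psi0 γ :=
  Algebra.TensorProduct.lift_tmul _ _ _ _ _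

end Psi

section Final

variable {K : Type} [CommRing K] {L : Type} [CommRing L] [Algebra K L]
  {M : Type} [AddCommGroup M] [Module K M]

set_option maxHeartbeats 1000000
set_option synthInstance.maxHeartbeats 500000

theorem psi_delta (t : L ⊗[K] M) (n : ℕ) :
    psi (K := K) (M := M) (delta t n) = dp L t n := by
  induction t using TensorProduct.induction_on generalizing n with
  | zero =>
    rcases n with _ | n
    · rw [delta_zeroth, dp_zero]; exact (psi (K := K) (M := M)).toRingHom.map_one
    · rw [delta_zero' (n + 1) (Nat.succ_ne_zero n), map_zero, dp_null]
  | tmul ℓ x =>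
    rw [delta_tmul, psi_tmul, psi0_dp]
    have e1 : (ℓ : L) ⊗ₜ[K] x = ℓ • ((1 : L) ⊗ₜ[K] x) := by
      rw [smul_tmul', smul_eq_mul, mul_one]
    rw [e1, dp_smul]
    have e2 : (ℓ ^ n) • dp L ((1 : L) ⊗ₜ[K] x) n
        = algebraMap L (DividedPowerAlgebra' L (L ⊗[K] M)) (ℓ ^ n)
          * dp L ((1 : L) ⊗ₜ[K] x) n := by
      rw [dp_eq_mkₐ, ← map_smul (Ideal.Quotient.mkₐ L _), MvPolynomial.smul_eq_C_mul,
        ← MvPolynomial.algebraMap_eq, map_mul, AlgHom.commutes]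
    rw [e2]
  | add t t' h h' =>
    rw [delta_add, map_sum, dp_add]
    refine Finset.sum_congr rfl fun p hp => ?_
    rw [map_mul, h, h']

theorem phi_comp_psi :
    (phi (K := K) (L := L) (M := M)).comp psi
      = AlgHom.id L (L ⊗[K] DividedPowerAlgebra' K M) := by
  apply Algebra.TensorProduct.ext
  · refine AlgHom.ext fun l => ?_
    have h1 := (((phi (K := K) (L := L) (M := M)).comp psi).comp
      (Algebra.TensorProduct.includeLeft :
        L →ₐ[L] L ⊗[K] DividedPowerAlgebra' K M)).commutes l
    have h2 := ((AlgHom.id L (L ⊗[K] DividedPowerAlgebra' K M)).comp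
      (Algebra.TensorProduct.includeLeft :
        L →ₐ[L] L ⊗[K] DividedPowerAlgebra' K M)).commutes l
    simpa using h1.trans h2.symm
  · apply Ideal.Quotient.algHom_ext (R₁ := K)
    apply MvPolynomial.algHom_ext
    rintro ⟨x, n⟩
    show phi (K := K) (psi (K := K) (M := M) ((1 : L) ⊗ₜ[K] dp K x n))
        = (1 : L) ⊗ₜ[K] dp K x n
    rw [psi_tmul, map_one, one_mul, psi0_dp, phi_dp, delta_tmul, one_pow]

theorem psi_comp_phi :
    (psi (K := K) (L := L) (M := M)).comp phi
      = AlgHom.id L (DividedPowerAlgebra' L (L ⊗[K] M)) := by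
  apply Ideal.Quotient.algHom_ext (R₁ := L)
  apply MvPolynomial.algHom_ext
  rintro ⟨t, n⟩
  show psi (K := K) (M := M) (phi (K := K) (dp L t n)) = dp L t n
  rw [phi_dp, psi_delta]

end Final

set_option maxHeartbeats 1000000
set_option synthInstance.maxHeartbeats 500000

/-- the divided power algebra commutes with base change: for a commutative
`K`-algebra `L` there is an isomorphism of `L`-algebras
`Γ_L(L ⊗_K M) ≅ L ⊗_K Γ_K(M)` sending `(1 ⊗ x)^(n)` to `1 ⊗ x^(n)`. -/
theorem dividedPowerAlgebra_baseChange
    (K : Type) [CommRing K] (L : Type) [CommRing L] [Algebra K L]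
    (M : Type) [AddCommGroup M] [Module K M] :
    ∃ e : DividedPowerAlgebra' L (L ⊗[K] M) ≃ₐ[L] L ⊗[K] DividedPowerAlgebra' K M,
      ∀ (x : M) (n : ℕ),
        e (dp L ((1 : L) ⊗ₜ[K] x) n) = (1 : L) ⊗ₜ[K] dp K x n := by
  
  refine ⟨AlgEquiv.ofAlgHom phi psi phi_comp_psi psi_comp_phi, fun x n => ?_⟩
  show phi (K := K) (L := L) (M := M) (dp L ((1 : L) ⊗ₜ[K] x) n) = (1 : L) ⊗ₜ[K] dp K x n
  rw [phi_dp, delta_tmul, one_pow]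
end
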